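/- Let β > 1, let f : 𝕋 → 𝕋 be Lipschitz with constant c > 0, and let 0 < ψ ≤ 1. Let n ≥ 1 be such that 2c·β^{−n} < ψ. Then for every full cylinder I_{n,β}(w) of order n, there exists a point x* ∈ I_{n,β}(w) such that every x ∈ 𝕋 with |x − x*| ≤ (1/8)ψβ^{−n} lies in I_{n,β}(w) and satisfies |T_β^n(x) − f(x)| ≤ ψ. -/
import Mathlib


/-- The β-transformation `x ↦ βx - ⌊βx⌋` on `[0,1)`. -/
noncomputable def betaT (β : ℝ) : ℝ → ℝ := fun x => Int.fract (β * x)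

/-- The usual metric on the torus `𝕋 = ℝ/ℤ`: distance from `a - b` to the nearest integer. -/
noncomputable def tdist (a b : ℝ) : ℝ := ⨅ k : ℤ, |a - b - (k : ℝ)|

/-- The cylinder of order `n` (with respect to base `β`) determined by the word `w`:
`I_{n,β}(w) = {x ∈ [0,1) : ε_i(x,β) = w_i, 1 ≤ i ≤ n}`. -/
noncomputable def cylinder (β : ℝ) (n : ℕ) (w : Fin n → ℤ) : Set ℝ :=
  {x | x ∈ Set.Ico (0 : ℝ) 1 ∧ ∀ i : Fin n, ⌊β * (betaT β)^[(i : ℕ)] x⌋ = w i}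

lemma tdist_nonneg' (a b : ℝ) : 0 ≤ tdist a b :=
  le_ciInf fun _ => abs_nonneg _

lemma tdist_bdd (a b : ℝ) : BddBelow (Set.range fun k : ℤ => |a - b - (k : ℝ)|) :=
  ⟨0, by rintro _ ⟨k, rfl⟩; exact abs_nonneg _⟩

lemma tdist_le' (a b : ℝ) (k : ℤ) : tdist a b ≤ |a - b - (k : ℝ)| :=
  ciInf_le (tdist_bdd a b) k

lemma tdist_eq_round (a b : ℝ) : tdist a b = |a - b - (round (a - b) : ℤ)| := by
  refine le_antisymm (tdist_le' a b _) (le_ciInf fun k => ?_)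
  exact round_le (a - b) k

lemma tdist_triangle' (a b c : ℝ) : tdist a c ≤ tdist a b + tdist b c := by
  rw [tdist_eq_round a b, tdist_eq_round b c]
  have h : a - c - ((round (a - b) + round (b - c) : ℤ) : ℝ)
      = (a - b - (round (a - b) : ℤ)) + (b - c - (round (b - c) : ℤ)) := by
    push_cast; ring
  calc tdist a c ≤ |a - c - ((round (a - b) + round (b - c) : ℤ) : ℝ)| := tdist_le' a c _
    _ ≤ _ := by rw [h]; exact abs_add_le _ _

lemma tdist_symm' (a b : ℝ) : tdist a b = tdist b a := by
  have h : ∀ x y : ℝ, tdist x y ≤ tdist y x := by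
    intro x y
    rw [tdist_eq_round y x]
    calc tdist x y ≤ |x - y - ((-(round (y - x))) : ℤ)| := tdist_le' x y _
      _ = |y - x - (round (y - x) : ℤ)| := by
          push_cast
          rw [show x - y - -(round (y - x) : ℝ) = -(y - x - (round (y - x) : ℝ)) by ring,
            abs_neg]
  exact le_antisymm (h a b) (h b a)

lemma tdist_fract (y : ℝ) : tdist (Int.fract y) y = 0 := by
  refine le_antisymm ?_ (tdist_nonneg' _ _)
  have h := tdist_le' (Int.fract y) y (-⌊y⌋)
  simpa [Int.fract, sub_eq_add_neg] using h

lemma tdist_le_abs (a b : ℝ) : tdist a b ≤ |a - b| := by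
  simpa using tdist_le' a b 0

set_option maxHeartbeats 1000000 in
/-- **Interior-ball construction in full cylinders.** Let `β > 1`, `f : 𝕋 → 𝕋` Lipschitz
with constant `c > 0`, `0 < ψ ≤ 1`, and `n ≥ 1` with `2 c β^{-n} < ψ`. Then every full
cylinder `I_{n,β}(w)` contains a point `x*` such that each `x ∈ 𝕋` with
`|x - x*| ≤ (1/8) ψ β^{-n}` lies in `I_{n,β}(w)` and satisfies `|T_β^n(x) - f(x)| ≤ ψ`. -/
theorem exists_ball_in_full_cylinder
    (β : ℝ) (hβ : 1 < β) (c : ℝ) (hc : 0 < c) (f : ℝ → ℝ)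
    (hf : ∀ x ∈ Set.Ico (0 : ℝ) 1, ∀ y ∈ Set.Ico (0 : ℝ) 1,
      tdist (f x) (f y) ≤ c * tdist x y)
    (ψ : ℝ) (hψ : 0 < ψ) (hψ1 : ψ ≤ 1)
    (n : ℕ) (hn : 1 ≤ n) (hnc : 2 * c * (β ^ n)⁻¹ < ψ)
    (w : Fin n → ℤ) (hfull : ∃ a : ℝ, cylinder β n w = Set.Ico a (a + (β ^ n)⁻¹)) :
    ∃ x' ∈ cylinder β n w, ∀ x ∈ Set.Ico (0 : ℝ) 1,
      tdist x x' ≤ (1 / 8) * ψ * (β ^ n)⁻¹ →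
      x ∈ cylinder β n w ∧ tdist ((betaT β)^[n] x) (f x) ≤ ψ := by
  obtain ⟨a, ha⟩ := hfull
  have hβ0 : (0:ℝ) < β := lt_trans one_pos hβ
  have hβn : (0:ℝ) < β ^ n := pow_pos hβ0 n
  set L : ℝ := (β ^ n)⁻¹ with hLdef
  have hL0 : 0 < L := inv_pos.mpr hβn
  have hβnL : β ^ n * L = 1 := mul_inv_cancel₀ (ne_of_gt hβn)
  have hLlt1 : L < 1 := by
    rw [hLdef, inv_lt_one_iff₀]
    right; exact one_lt_pow₀ hβ (by omega)
  clear_value L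
  have hcL : c * L < ψ / 2 := by linarith
  have haC : a ∈ cylinder β n w := by
    rw [ha]; exact ⟨le_refl a, by linarith⟩
  have hsub : cylinder β n w ⊆ Set.Ico 0 1 := fun x hx => hx.1
  have ha0 : 0 ≤ a := (hsub haC).1
  have ha1 : a + L ≤ 1 := by
    by_contra h
    push_neg at h
    have h1 : (1:ℝ) ∈ cylinder β n w := by
      rw [ha]; exact ⟨le_of_lt (hsub haC).2, h⟩
    exact absurd (hsub h1).2 (lt_irrefl 1)
  -- affine structure of T^n on the cylinder
  have key : ∀ x ∈ cylinder β n w, ∀ y ∈ cylinder β n w, ∀ m, m ≤ n →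
      (betaT β)^[m] x - (betaT β)^[m] y = β ^ m * (x - y) := by
    intro x hx y hy m
    induction m with
    | zero => intro _; simp
    | succ m ih =>
      intro hm
      have hm' : m < n := hm
      have ihm := ih hm'.le
      rw [Function.iterate_succ_apply', Function.iterate_succ_apply']
      have hx' := hx.2 ⟨m, hm'⟩
      have hy' := hy.2 ⟨m, hm'⟩
      simp only [betaT, Int.fract]
      rw [hx', hy']
      linear_combination β * ihm
  have hrange : ∀ z : ℝ, (betaT β)^[n] z ∈ Set.Ico (0:ℝ) 1 := by
    intro z
    have h : (betaT β)^[n] z = betaT β ((betaT β)^[n - 1] z) := by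
      conv_lhs => rw [show n = (n - 1) + 1 from (Nat.succ_pred_eq_of_pos hn).symm]
      rw [Function.iterate_succ_apply']
    rw [h]
    exact ⟨Int.fract_nonneg _, Int.fract_lt_one _⟩
  have hTa : (betaT β)^[n] a = 0 := by
    rcases eq_or_lt_of_le (hrange a).1 with h | htpos
    · exact h.symm
    · exfalso
      have ht1 : (betaT β)^[n] a < 1 := (hrange a).2
      have hxC : a + L - (betaT β)^[n] a * L / 2 ∈ cylinder β n w := by
        rw [ha]
        refine ⟨by nlinarith, by nlinarith⟩
      have hkey := key _ hxC a haC n le_rfl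
      have hTx := (hrange (a + L - (betaT β)^[n] a * L / 2)).2
      have h2 : β ^ n * (a + L - (betaT β)^[n] a * L / 2 - a)
          = 1 - (betaT β)^[n] a / 2 := by
        linear_combination (1 - (betaT β)^[n] a / 2) * hβnL
      linarith
  have hTn : ∀ x ∈ cylinder β n w, (betaT β)^[n] x = β ^ n * (x - a) := by
    intro x hx
    have h := key x hx a haC n le_rfl
    rw [hTa] at h; linarith
  -- construction of the point x'
  have hθ0 : 0 ≤ Int.fract (f a) := Int.fract_nonneg _
  have hθ1 : Int.fract (f a) < 1 := Int.fract_lt_one _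
  obtain ⟨θ', hθ'def⟩ : ∃ t : ℝ, t = min (max (Int.fract (f a)) (ψ / 8)) (1 - ψ / 4) :=
    ⟨_, rfl⟩
  have hθ'lb : ψ / 8 ≤ θ' := by
    rw [hθ'def]; exact le_min (le_max_right _ _) (by linarith)
  have hθ'ub : θ' ≤ 1 - ψ / 4 := by rw [hθ'def]; exact min_le_right _ _
  have hclamp_up : θ' ≤ Int.fract (f a) + ψ / 4 := by
    rw [hθ'def]
    exact le_trans (min_le_left _ _) (max_le (by linarith) (by linarith))
  have hclamp_lo : Int.fract (f a) - ψ / 4 ≤ θ' := by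
    rw [hθ'def]
    exact le_min (le_trans (by linarith) (le_max_left _ _)) (by linarith)
  obtain ⟨x', hx'def⟩ : ∃ t : ℝ, t = a + θ' * L := ⟨_, rfl⟩
  have hθ'Llb : ψ / 8 * L ≤ θ' * L := mul_le_mul_of_nonneg_right hθ'lb hL0.le
  have hθ'Lub : θ' * L ≤ (1 - ψ / 4) * L := mul_le_mul_of_nonneg_right hθ'ub hL0.le
  have hψL : 0 < ψ * L := mul_pos hψ hL0
  have hx'C : x' ∈ cylinder β n w := by
    rw [ha, hx'def]
    constructor
    · simp only [Set.mem_Ico] at *; nlinarith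
    · nlinarith
  have hTx' : (betaT β)^[n] x' = θ' := by
    rw [hTn x' hx'C, hx'def]
    linear_combination θ' * hβnL
  -- error at the center
  have hE : tdist ((betaT β)^[n] x') (f x') ≤ 3 * ψ / 4 := by
    rw [hTx']
    have h1 : tdist θ' (Int.fract (f a)) ≤ ψ / 4 := by
      refine le_trans (tdist_le_abs _ _) (abs_le.mpr ⟨by linarith, by linarith⟩)
    have h2 : tdist (Int.fract (f a)) (f a) = 0 := tdist_fract (f a)
    have h3 : tdist (f a) (f x') ≤ c * tdist a x' :=
      hf a (hsub haC) x' (hsub hx'C)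
    have h4 : tdist a x' ≤ θ' * L := by
      calc tdist a x' ≤ |a - x'| := tdist_le_abs _ _
        _ = |θ' * L| := by
            rw [hx'def, show a - (a + θ' * L) = -(θ' * L) by ring, abs_neg]
        _ = θ' * L := abs_of_nonneg (by nlinarith)
    have h5 : c * tdist a x' ≤ c * L := by
      have h6 : tdist a x' ≤ L := le_trans h4 (by nlinarith)
      exact mul_le_mul_of_nonneg_left h6 hc.le
    calc tdist θ' (f x') ≤ tdist θ' (Int.fract (f a)) + tdist (Int.fract (f a)) (f x') :=
          tdist_triangle' _ _ _
      _ ≤ tdist θ' (Int.fract (f a)) + (tdist (Int.fract (f a)) (f a) + tdist (f a) (f x')) := by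
          linarith [tdist_triangle' (Int.fract (f a)) (f a) (f x')]
      _ ≤ ψ / 4 + (0 + c * L) := by linarith
      _ ≤ 3 * ψ / 4 := by linarith
  refine ⟨x', hx'C, ?_⟩
  intro x hx hxd
  have hx0 : 0 ≤ x := hx.1
  have hx1 : x < 1 := hx.2
  -- extract the integer representative; it must be 0
  have hdk : |x - x' - (round (x - x') : ℤ)| ≤ 1 / 8 * ψ * L := by
    rw [← tdist_eq_round]; exact hxd
  have hdk1 : x - x' - ((round (x - x') : ℤ) : ℝ) ≤ 1 / 8 * ψ * L :=
    le_trans (le_abs_self _) hdk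
  have hdk2 : -(1 / 8 * ψ * L) ≤ x - x' - ((round (x - x') : ℤ) : ℝ) :=
    neg_le_of_abs_le hdk
  have hku : ((round (x - x') : ℤ) : ℝ) < 1 := by
    by_contra h
    push_neg at h
    linarith [hx'def, hθ'Llb, hdk2, hx1, ha0]
  have hkl : (-1 : ℝ) < ((round (x - x') : ℤ) : ℝ) := by
    by_contra h
    push_neg at h
    linarith [hx'def, hθ'Lub, hdk1, hx0, ha1, hψL]
  have hk0 : round (x - x') = 0 := by
    have h1 : round (x - x') < 1 := by exact_mod_cast hku
    have h2 : -1 < round (x - x') := by exact_mod_cast hkl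
    omega
  rw [hk0] at hdk1 hdk2
  push_cast at hdk1 hdk2
  have hxC : x ∈ cylinder β n w := by
    rw [ha]
    constructor
    · linarith [hx'def, hθ'Llb, hdk2]
    · linarith [hx'def, hθ'Lub, hdk1, hψL]
  refine ⟨hxC, ?_⟩
  -- final estimate
  have hT1 : |(betaT β)^[n] x - (betaT β)^[n] x'| ≤ ψ / 8 := by
    have h := key x hxC x' hx'C n le_rfl
    rw [h, abs_mul, abs_of_pos hβn]
    have habs : |x - x'| ≤ 1 / 8 * ψ * L :=
      abs_le.mpr ⟨by linarith, by linarith⟩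
    calc β ^ n * |x - x'| ≤ β ^ n * (1 / 8 * ψ * L) :=
          mul_le_mul_of_nonneg_left habs hβn.le
      _ = ψ / 8 := by
          rw [show β ^ n * (1 / 8 * ψ * L) = 1 / 8 * ψ * (β ^ n * L) by ring, hβnL]
          ring
  have hT3 : tdist (f x') (f x) ≤ ψ / 16 := by
    have h3 := hf x' (hsub hx'C) x hx
    have h4 : tdist x' x ≤ 1 / 8 * ψ * L := by
      rw [tdist_symm']; exact hxd
    have h5 : c * tdist x' x ≤ c * (1 / 8 * ψ * L) :=
      mul_le_mul_of_nonneg_left h4 hc.le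
    have h6 : c * (1 / 8 * ψ * L) ≤ ψ / 16 := by
      nlinarith [mul_lt_mul_of_pos_right hcL hψ,
        mul_le_mul_of_nonneg_left hψ1 hψ.le]
    linarith
  calc tdist ((betaT β)^[n] x) (f x)
      ≤ tdist ((betaT β)^[n] x) ((betaT β)^[n] x') + tdist ((betaT β)^[n] x') (f x) :=
        tdist_triangle' _ _ _
    _ ≤ tdist ((betaT β)^[n] x) ((betaT β)^[n] x') +
        (tdist ((betaT β)^[n] x') (f x') + tdist (f x') (f x)) := by
        linarith [tdist_triangle' ((betaT β)^[n] x') (f x') (f x)]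
    _ ≤ ψ / 8 + (3 * ψ / 4 + ψ / 16) := by
        have h7 := le_trans (tdist_le_abs ((betaT β)^[n] x) ((betaT β)^[n] x')) hT1
        linarith
    _ ≤ ψ := by linarith
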